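/- Let a(m) denote the number of signatures of length m. Then a(1) = 3, a(2) = 7, and a(m) = 2·a(m−1) + a(m−2) for all m ≥ 3. -/

import Mathlib

open scoped Classical

/-- The three-letter alphabet {uncovered, covered, occupied}. -/
inductive VState : Type
  | unc | cov | occ
  deriving DecidableEq

instance instFintypeVState : Fintype VState :=
  ⟨{VState.unc, VState.cov, VState.occ}, fun x => by cases x <;> simp⟩

/-- A signature of length `m`: a string over {unc, cov, occ} with no adjacent
(unc, occ) or (occ, unc) pair. -/
def IsSignature {m : ℕ} (σ : Fin m → VState) : Prop :=
  ∀ i : Fin m, ∀ h : (i : ℕ) + 1 < m,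
    ¬(σ i = VState.unc ∧ σ ⟨(i : ℕ) + 1, h⟩ = VState.occ) ∧
    ¬(σ i = VState.occ ∧ σ ⟨(i : ℕ) + 1, h⟩ = VState.unc)

/-- `a(m)`: the number of signatures of length `m`. -/
noncomputable def numSig (m : ℕ) : ℕ :=
  Fintype.card {σ : Fin m → VState // IsSignature σ}

/-!
Record a signature by its last letter. `cov` may follow any letter, while `unc` and `occ` may
each follow only themselves and `cov`. Hence, with `e(n, s)` the number of signatures of length
`n` ending in `s`, summing `e(n + 1, ·)` counts every signature of length `n` twice and those
ending in `cov` once more: `a(n + 1) = 2 a(n) + e(n, cov)`, and `e(n + 1, cov) = a(n)`.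
-/

open Finset

section RelChain

variable {α : Type*} (r : α → α → Prop)

def IsRelChain {n : ℕ} (σ : Fin (n + 1) → α) : Prop :=
  ∀ i : Fin n, r (σ i.castSucc) (σ i.succ)

variable {r}

theorem isRelChain_snoc_iff {n : ℕ} {σ : Fin (n + 1) → α} {s : α} :
    IsRelChain r (Fin.snoc σ s : Fin (n + 2) → α) ↔ IsRelChain r σ ∧ r (σ (Fin.last n)) s := by
  simp only [IsRelChain, Fin.forall_fin_succ' (n := n), Fin.succ_castSucc, Fin.snoc_castSucc,
    Fin.succ_last, Fin.snoc_last]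

theorem isRelChain_iff_init {n : ℕ} {σ : Fin (n + 2) → α} :
    IsRelChain r σ ↔ IsRelChain r (Fin.init σ) ∧ r (Fin.init σ (Fin.last n)) (σ (Fin.last _)) := by
  conv_lhs => rw [← Fin.snoc_init_self σ]
  exact isRelChain_snoc_iff

variable [Fintype α] (r)

noncomputable def numChainsEndingAt (n : ℕ) (s : α) : ℕ :=
  #{σ : Fin (n + 1) → α | IsRelChain r σ ∧ σ (Fin.last n) = s}

theorem card_isRelChain_eq_sum (n : ℕ) :
    #{σ : Fin (n + 1) → α | IsRelChain r σ} = ∑ s, numChainsEndingAt r n s := by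
  rw [card_eq_sum_card_fiberwise (f := fun σ => σ (Fin.last n)) (t := univ)
    fun _ _ => mem_coe.2 (mem_univ _)]
  simp only [numChainsEndingAt, filter_filter]

theorem numChainsEndingAt_zero (s : α) : numChainsEndingAt r 0 s = 1 := by
  refine card_eq_one.2 ⟨fun _ => s, eq_singleton_iff_unique_mem.2 ⟨?_, ?_⟩⟩
  · simp [IsRelChain]
  · intro σ hσ
    funext i
    rw [Fin.fin_one_eq_zero i]
    exact (mem_filter.1 hσ).2.2

theorem numChainsEndingAt_succ (n : ℕ) (s : α) :
    numChainsEndingAt r (n + 1) s = ∑ t with r t s, numChainsEndingAt r n t := by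
  have hinit : numChainsEndingAt r (n + 1) s =
      #{τ : Fin (n + 1) → α | IsRelChain r τ ∧ r (τ (Fin.last n)) s} := by
    refine card_nbij' Fin.init (Fin.snoc · s) ?_ ?_ ?_ ?_
    · intro σ hσ
      simp only [mem_coe, mem_filter, mem_univ, true_and, isRelChain_iff_init (σ := σ)] at hσ ⊢
      exact hσ.2 ▸ hσ.1
    · intro τ hτ
      simp only [mem_coe, mem_filter, mem_univ, true_and, isRelChain_snoc_iff,
        Fin.snoc_last] at hτ ⊢
      exact ⟨hτ, trivial⟩
    · intro σ hσ
      simp only [mem_coe, mem_filter, mem_univ, true_and] at hσ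
      exact hσ.2 ▸ Fin.snoc_init_self σ
    · intro τ _
      exact Fin.init_snoc _ _
  rw [hinit, card_eq_sum_card_fiberwise (f := fun τ => τ (Fin.last n)) (t := {t | r t s})]
  · refine sum_congr rfl fun t ht => ?_
    rw [filter_filter]
    refine congrArg card (filter_congr fun τ _ => ?_)
    simp only [mem_filter, mem_univ, true_and] at ht
    constructor
    · rintro ⟨⟨hτ, -⟩, rfl⟩
      exact ⟨hτ, rfl⟩
    · rintro ⟨hτ, rfl⟩
      exact ⟨⟨hτ, ht⟩, rfl⟩
  · intro τ hτ
    simp_all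

end RelChain

namespace VState

def Compatible (t s : VState) : Prop :=
  ¬(t = unc ∧ s = occ) ∧ ¬(t = occ ∧ s = unc)

theorem sum_univ {M : Type*} [AddCommMonoid M] (f : VState → M) :
    ∑ s, f s = f unc + f cov + f occ := by
  rw [show (univ : Finset VState) = {unc, cov, occ} from rfl, sum_insert (by decide),
    sum_pair (by decide), add_assoc]

end VState

open VState

theorem isSignature_iff_isRelChain {n : ℕ} (σ : Fin (n + 1) → VState) :
    IsSignature σ ↔ IsRelChain Compatible σ :=
  ⟨fun h i => h i.castSucc (by simp), fun h i hi => h ⟨i, by omega⟩⟩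

theorem numSig_succ (n : ℕ) : numSig (n + 1) = ∑ s, numChainsEndingAt Compatible n s := by
  rw [numSig, Fintype.card_subtype, ← card_isRelChain_eq_sum]
  simp only [isSignature_iff_isRelChain]

theorem numChainsEndingAt_cov (n : ℕ) :
    numChainsEndingAt Compatible (n + 1) cov = numSig (n + 1) := by
  rw [numChainsEndingAt_succ, numSig_succ, filter_true_of_mem fun t _ => by simp [Compatible]]

theorem numSig_add_two (n : ℕ) :
    numSig (n + 2) = 2 * numSig (n + 1) + numChainsEndingAt Compatible n cov := by
  simp only [numSig_succ, numChainsEndingAt_succ, sum_filter, VState.sum_univ, Compatible,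
    reduceCtorEq, and_false, and_true, and_self, not_false_eq_true, not_true_eq_false, ↓reduceIte,
    add_zero, zero_add]
  ring

theorem numSig_one : numSig 1 = 3 := by
  simp only [numSig_succ, VState.sum_univ, numChainsEndingAt_zero]

theorem numSig_two : numSig 2 = 7 := by
  rw [numSig_add_two, numSig_one, numChainsEndingAt_zero]

theorem numSig_add_three (n : ℕ) : numSig (n + 3) = 2 * numSig (n + 2) + numSig (n + 1) := by
  rw [numSig_add_two, numChainsEndingAt_cov]

/-- `a(1) = 3`, `a(2) = 7`, and `a(m) = 2·a(m−1) + a(m−2)` for all `m ≥ 3`. -/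
theorem numSig_recurrence :
    numSig 1 = 3 ∧ numSig 2 = 7 ∧
      ∀ m : ℕ, 3 ≤ m → numSig m = 2 * numSig (m - 1) + numSig (m - 2) := by
  refine ⟨numSig_one, numSig_two, fun m hm => ?_⟩
  obtain ⟨n, rfl⟩ := Nat.exists_eq_add_of_le' hm
  exact numSig_add_three n
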